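/- Let (V,f) be a nondegenerate 4-dimensional symplectic space with symplectic basis e₁,e₂,e₃,e₄ (f(e₁,e₃)=f(e₂,e₄)=1, other basis pairings zero), W the span of e₁,e₂,e₃, and 𝔰 the subalgebra of 𝔰_f generated by {w⊗f_w : w ∈ W}. Then e₂ ⊗ f_{e₂} is a nonzero central element of 𝔰. -/

import Mathlib

attribute [local instance 100] LieRing.ofAssociativeRing

/-- The "pure tensor" `v ⊗ f_v`, viewed as the endomorphism `u ↦ f(v,u) • v` of `V`. -/
noncomputable def rk1 {F V : Type*} [Field F] [AddCommGroup V] [Module F V]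
    (f : V →ₗ[F] V →ₗ[F] F) (v : V) : Module.End F V :=
  (f v).smulRight v

/-!
Since `⁅v ⊗ f_v, w ⊗ f_w⁆ = f(v,w) • v ⊗ f_w - f(w,v) • w ⊗ f_v` and `f` is alternating, a vector
`v` that is `f`-orthogonal to `W` gives an element `v ⊗ f_v` commuting with every generator of `𝔰`,
hence with all of `𝔰`. In the symplectic basis, `e₂` is orthogonal to `e₁, e₂, e₃`, and
`e₂ ⊗ f_{e₂}` is nonzero since it sends `e₄` to `e₂`.
-/

theorem LieSubalgebra.lie_eq_zero_of_mem_lieSpan {R L : Type*} [CommRing R] [LieRing L]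
    [LieAlgebra R L] {s : Set L} {a : L} (h : ∀ x ∈ s, ⁅a, x⁆ = 0) {x : L}
    (hx : x ∈ lieSpan R L s) : ⁅a, x⁆ = 0 := by
  induction hx using lieSpan_induction with
  | mem x hx => exact h x hx
  | zero => exact lie_zero a
  | add x y _ _ hx hy => rw [lie_add, hx, hy, add_zero]
  | smul c x _ hx => rw [lie_smul, hx, smul_zero]
  | lie x y _ _ hx hy => rw [leibniz_lie, hx, hy, zero_lie, lie_zero, add_zero]

section rk1

variable {F V : Type*} [Field F] [AddCommGroup V] [Module F V] {f : V →ₗ[F] V →ₗ[F] F}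

theorem rk1_apply (v u : V) : rk1 f v u = f v u • v := rfl

theorem rk1_ne_zero {v u : V} (hv : v ≠ 0) (hu : f v u ≠ 0) : rk1 f v ≠ 0 := fun h ↦
  smul_ne_zero hu hv (by rw [← rk1_apply, h, LinearMap.zero_apply])

theorem rk1_lie_rk1_eq_zero {v w : V} (hvw : f v w = 0) (hwv : f w v = 0) :
    ⁅rk1 f v, rk1 f w⁆ = 0 := by
  ext u
  simp [rk1_apply, Ring.lie_def, hvw, hwv]

theorem rk1_lie_eq_zero_of_mem_lieSpan (hf : f.IsAlt) {W : Submodule F V} {v : V}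
    (hv : ∀ w ∈ W, f v w = 0) {s : Module.End F V}
    (hs : s ∈ LieSubalgebra.lieSpan F (Module.End F V) (rk1 f '' W)) : ⁅rk1 f v, s⁆ = 0 := by
  refine LieSubalgebra.lie_eq_zero_of_mem_lieSpan ?_ hs
  rintro _ ⟨w, hw, rfl⟩
  exact rk1_lie_rk1_eq_zero (hv w hw) (hf.eq_iff.mp (hv w hw))

end rk1

theorem stmt14_general {F V : Type*} [Field F] [AddCommGroup V] [Module F V]
    (e : Module.Basis (Fin 4) F V)
    (f : V →ₗ[F] V →ₗ[F] F) (halt : ∀ v : V, f v v = 0)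
    (h24 : f (e 1) (e 3) = 1)
    (h12 : f (e 0) (e 1) = 0)
    (h23 : f (e 1) (e 2) = 0) :
    rk1 f (e 1) ≠ 0 ∧
    rk1 f (e 1) ∈ LieSubalgebra.lieSpan F (Module.End F V)
        (rk1 f '' (Submodule.span F {e 0, e 1, e 2} : Submodule F V)) ∧
    ∀ s ∈ LieSubalgebra.lieSpan F (Module.End F V)
        (rk1 f '' (Submodule.span F {e 0, e 1, e 2} : Submodule F V)),
      ⁅rk1 f (e 1), s⁆ = 0 := by
  have hf : f.IsAlt := halt
  have horth : Submodule.span F {e 0, e 1, e 2} ≤ LinearMap.ker (f (e 1)) := by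
    rw [Submodule.span_le]
    rintro _ (rfl | rfl | rfl)
    · exact hf.eq_iff.mp h12
    · exact halt _
    · exact h23
  refine ⟨rk1_ne_zero (e.ne_zero 1) (by rw [h24]; exact one_ne_zero), ?_,
    fun s hs ↦ rk1_lie_eq_zero_of_mem_lieSpan hf (fun w hw ↦ horth hw) hs⟩
  exact LieSubalgebra.subset_lieSpan ⟨e 1, Submodule.subset_span (by simp), rfl⟩

/-- Let `(V,f)` be a 4-dimensional symplectic space with symplectic basis
`e₁, e₂, e₃, e₄` (`f(e₁,e₃) = f(e₂,e₄) = 1`, other basis pairings zero), `W` the span of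
`e₁, e₂, e₃`, and `𝔰` the subalgebra of `𝔰_f` generated by the tensors `w ⊗ f_w`, `w ∈ W`.
Then `e₂ ⊗ f_{e₂}` is a nonzero central element of `𝔰`. -/
theorem stmt14 {F V : Type*} [Field F] [AddCommGroup V] [Module F V]
    (h2 : (2 : F) ≠ 0)
    (e : Module.Basis (Fin 4) F V)
    (f : V →ₗ[F] V →ₗ[F] F) (halt : ∀ v : V, f v v = 0)
    (h13 : f (e 0) (e 2) = 1) (h24 : f (e 1) (e 3) = 1)
    (h12 : f (e 0) (e 1) = 0) (h14 : f (e 0) (e 3) = 0)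
    (h23 : f (e 1) (e 2) = 0) (h34 : f (e 2) (e 3) = 0) :
    rk1 f (e 1) ≠ 0 ∧
    rk1 f (e 1) ∈ LieSubalgebra.lieSpan F (Module.End F V)
        (rk1 f '' (Submodule.span F {e 0, e 1, e 2} : Submodule F V)) ∧
    ∀ s ∈ LieSubalgebra.lieSpan F (Module.End F V)
        (rk1 f '' (Submodule.span F {e 0, e 1, e 2} : Submodule F V)),
      ⁅rk1 f (e 1), s⁆ = 0 :=
  stmt14_general e f halt h24 h12 h23
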